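/- arXiv:1812.08320 — 3 statements merged into one kernel-verified Lean document; each statement's English description precedes it below -/
import Mathlib

section
/- Let θ ∈ ℝ, let f be a real polynomial, and let u₀ ∈ ℝ. If (D_θ f)(u₀) = 0, then (D_θ(X·f))(u₀) = θ·(D_θ f')(u₀). -/
/-!
Since `[∂², X] = 2∂`, conjugating `X` by `D_θ = exp((θ/2)∂²)` gives `D_θ (X f) = X D_θ f + θ D_θ f'`
as polynomials; evaluating at a zero `u₀` of `D_θ f` kills the first term.
-/

/-- The linear operator `D_θ` on real polynomials:
`D_θ f = Σ_{k≥0} (θ/2)^k f^{(2k)} / k!` (a finite sum). -/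
noncomputable def Dop (θ : ℝ) (f : Polynomial ℝ) : Polynomial ℝ :=
  ∑ k ∈ Finset.range (f.natDegree + 1),
    Polynomial.C ((θ/2)^k / (k.factorial : ℝ)) * (Polynomial.derivative^[2*k] f)

open Polynomial Finset

lemma Dop_eq_sum_range (θ : ℝ) (f : ℝ[X]) {N : ℕ} (hN : f.natDegree < N) :
    Dop θ f = ∑ k ∈ range N, C ((θ / 2) ^ k / k.factorial) * derivative^[2 * k] f := by
  refine sum_subset (range_subset_range.2 hN) fun k _ hk => ?_
  rw [mem_range, not_lt] at hk
  rw [iterate_derivative_eq_zero (by omega), mul_zero]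

lemma half_pow_div_factorial_succ_mul (θ : ℝ) (k : ℕ) :
    (θ / 2) ^ (k + 1) / (k + 1).factorial * (2 * (k + 1) : ℕ) = θ * ((θ / 2) ^ k / k.factorial) := by
  have hk : (k.factorial : ℝ) ≠ 0 := by positivity
  push_cast [Nat.factorial_succ]
  field_simp
  ring

lemma Dop_X_mul (θ : ℝ) (f : ℝ[X]) :
    Dop θ (X * f) = X * Dop θ f + C θ * Dop θ (derivative f) := by
  have hXf : (X * f).natDegree < f.natDegree + 2 :=
    natDegree_mul_le.trans_lt (by rw [natDegree_X]; omega)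
  have hf' : (derivative f).natDegree < f.natDegree + 1 :=
    (natDegree_derivative_le f).trans_lt (by omega)
  rw [Dop_eq_sum_range θ (X * f) hXf, Dop_eq_sum_range θ f (N := f.natDegree + 2) (by omega),
    Dop_eq_sum_range θ (derivative f) hf']
  have hterm : ∀ k, C ((θ / 2) ^ k / k.factorial) * derivative^[2 * k] (X * f) =
      X * (C ((θ / 2) ^ k / k.factorial) * derivative^[2 * k] f) +
        C ((θ / 2) ^ k / k.factorial * (2 * k : ℕ)) * derivative^[2 * k - 1] f := by
    intro k
    rw [mul_comm X f, iterate_derivative_mul_X, nsmul_eq_mul, C_mul, map_natCast]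
    ring
  simp only [hterm, sum_add_distrib, ← mul_sum]
  congr 1
  rw [sum_range_succ', mul_sum]
  simp only [Nat.cast_zero, mul_zero, C_0, zero_mul, add_zero]
  refine sum_congr rfl fun k _ => ?_
  rw [half_pow_div_factorial_succ_mul, C_mul, mul_assoc, show 2 * (k + 1) - 1 = 2 * k + 1 by omega,
    Function.iterate_succ_apply]

/-- If `(D_θ f)(u₀) = 0`, then `(D_θ(X·f))(u₀) = θ·(D_θ f')(u₀)`. -/
theorem stmt9 (θ : ℝ) (f : Polynomial ℝ) (u₀ : ℝ)
    (h : (Dop θ f).eval u₀ = 0) :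
    (Dop θ (Polynomial.X * f)).eval u₀
      = θ * (Dop θ (Polynomial.derivative f)).eval u₀ := by
  rw [Dop_X_mul, eval_add, eval_mul, eval_mul, h, mul_zero, zero_add, eval_C]
end

section
/- Let g be a monic real-rooted polynomial of degree n ≥ 1 (g has n real roots counted with multiplicity), and let θ > 0. Then the polynomial c := D_{−θ} g = Σ_{k≥0} (−θ/2)^k g^{(2k)}/k! has exactly n distinct real roots. (This is the core of the strict hyperbolicity of the Gaussian-EQMOM moment system, whose characteristic polynomial is c = D_{−σ²} g with g = (X−u_1)²⋯(X−u_N)²(X−Ũ) and σ² > 0.) -/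
/-!
Since `D_θ = exp ((θ / 2) d²/dX²)`, it satisfies
`D_θ ((X - a) p) = (X - a) D_θ p + θ (D_θ p)'`. Writing `g = ∏ (X - rᵢ)` and peeling off one
factor at a time, `D_{-θ} g` is obtained from `1` by repeated steps `q ↦ (X - a) q - θ q'`.
If `q` is monic with simple real roots `σ₀ < ⋯ < σₘ₋₁`, the new polynomial takes the value
`-θ q'(σⱼ)` at `σⱼ`; these values alternate in sign, ending negative at `σₘ₋₁`, and together
with the signs at `±∞` they give `m + 1` sign changes, hence `m + 1` simple real roots.
-/

open Polynomial Finset Filter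
open scoped Nat

theorem iterate_derivative_X_sub_C_mul {R : Type*} [CommRing R] (a : R) (p : R[X]) (n : ℕ) :
    derivative^[n] ((X - C a) * p) = (X - C a) * derivative^[n] p + n • derivative^[n - 1] p := by
  rw [sub_mul, iterate_derivative_sub, mul_comm X p, iterate_derivative_mul_X,
    iterate_derivative_C_mul]
  ring

theorem dop_eq_sum_range (θ : ℝ) {f : ℝ[X]} {N : ℕ} (hN : f.natDegree < N) :
    Dop θ f = ∑ k ∈ range N, C ((θ / 2) ^ k / k !) * derivative^[2 * k] f := by
  refine sum_subset (range_subset_range.2 hN) fun k _ hk => ?_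
  rw [iterate_derivative_eq_zero (by simp at hk; omega), mul_zero]

theorem dop_one (θ : ℝ) : Dop θ 1 = 1 := by
  rw [Dop, natDegree_one, sum_range_one]
  simp

theorem dop_X_sub_C_mul (θ a : ℝ) (p : ℝ[X]) :
    Dop θ ((X - C a) * p) = (X - C a) * Dop θ p + C θ * derivative (Dop θ p) := by
  have hdeg : ((X - C a) * p).natDegree < p.natDegree + 2 :=
    natDegree_mul_le.trans_lt (by rw [natDegree_X_sub_C]; omega)
  rw [dop_eq_sum_range θ hdeg]
  nth_rw 1 [dop_eq_sum_range θ (by omega : p.natDegree < p.natDegree + 2)]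
  simp only [iterate_derivative_X_sub_C_mul, mul_add, sum_add_distrib, mul_sum]
  refine congrArg₂ (· + ·) (sum_congr rfl fun k _ => by ring) ?_
  rw [sum_range_succ', Dop, derivative_sum, mul_sum]
  simp only [mul_zero, zero_smul, add_zero]
  refine sum_congr rfl fun k _ => ?_
  have hcoeff :
      (θ / 2) ^ (k + 1) / (k + 1)! * ((2 * (k + 1) : ℕ) : ℝ) = θ * ((θ / 2) ^ k / k !) := by
    rw [pow_succ, Nat.factorial_succ]
    push_cast
    field_simp
  rw [show 2 * (k + 1) - 1 = 2 * k + 1 by omega, Function.iterate_succ_apply', derivative_C_mul,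
    nsmul_eq_mul, ← mul_assoc, ← mul_assoc, ← C_eq_natCast, ← C_mul, ← C_mul, hcoeff]

theorem exists_strictMono_eq_zero_of_alternating {f : ℝ → ℝ} (hf : Continuous f) {n : ℕ}
    {x : Fin (n + 1) → ℝ} (hx : StrictMono x)
    (hsign : ∀ i : Fin (n + 1), 0 < (-1) ^ (n - i : ℕ) * f (x i)) :
    ∃ c : Fin n → ℝ, StrictMono c ∧ ∀ i, f (c i) = 0 := by
  have hchange : ∀ i : Fin n, ∃ c ∈ Set.Ioo (x i.castSucc) (x i.succ), f c = 0 := by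
    intro i
    set s : ℝ := (-1) ^ (n - i.succ : ℕ)
    have hleft := hsign i.castSucc
    rw [show n - (i.castSucc : ℕ) = (n - i.succ : ℕ) + 1 by simp; omega, pow_succ] at hleft
    have hcont : ContinuousOn (fun y => s * f y) (Set.Icc (x i.castSucc) (x i.succ)) :=
      (hf.const_mul s).continuousOn
    obtain ⟨c, hc, hroot⟩ := intermediate_value_Ioo (hx i.castSucc_lt_succ).le hcont
      ⟨by linarith, hsign i.succ⟩
    exact ⟨c, hc, (mul_eq_zero.1 hroot).resolve_left (pow_ne_zero _ (by norm_num))⟩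
  choose c hc hroot using hchange
  refine ⟨c, fun i j hij => ?_, hroot⟩
  calc c i < x i.succ := (hc i).2
    _ ≤ x j.castSucc := hx.monotone (Fin.succ_le_castSucc_iff.2 hij)
    _ < c j := (hc j).1

theorem eq_prod_X_sub_C_of_injective_isRoot {K ι : Type*} [Field K] [Fintype ι] {p : K[X]}
    (hp : p.Monic) (hdeg : p.natDegree ≤ Fintype.card ι) {c : ι → K} (hc : c.Injective)
    (hroot : ∀ i, p.IsRoot (c i)) : p = ∏ i, (X - C (c i)) := by
  refine eq_of_monic_of_dvd_of_natDegree_le (monic_prod_of_monic _ _ fun i _ => monic_X_sub_C _)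
    hp ?_ ?_
  · exact prod_dvd_of_coprime ((pairwise_coprime_X_sub_C hc).set_pairwise _)
      fun i _ => dvd_iff_isRoot.2 (hroot i)
  · rwa [← Lagrange.nodal_eq, Lagrange.natDegree_nodal, card_univ]

theorem Polynomial.Monic.eventually_eval_pos_atTop {p : ℝ[X]} (hp : p.Monic) :
    ∀ᶠ x in atTop, 0 < p.eval x := by
  refine p.isEquivalent_atTop_lead.eventually_pos ((eventually_gt_atTop 0).mono fun x hx => ?_)
  simpa [hp.leadingCoeff] using pow_pos hx _

theorem Polynomial.Monic.eventually_neg_one_pow_mul_eval_pos_atBot {p : ℝ[X]} (hp : p.Monic) :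
    ∀ᶠ x in atBot, 0 < (-1) ^ p.natDegree * p.eval x := by
  refine ((Asymptotics.IsEquivalent.refl (u := fun _ => (-1 : ℝ) ^ p.natDegree)).mul
    p.isEquivalent_atBot_lead).eventually_pos ((eventually_lt_atBot 0).mono fun x hx => ?_)
  simpa [hp.leadingCoeff, ← mul_pow] using pow_pos (neg_pos.2 hx) p.natDegree

theorem exists_strictMono_eq_prod_X_sub_C_of_alternating {p : ℝ[X]} {m : ℕ} (hp : p.Monic)
    (hdeg : p.natDegree = m + 1) {σ : Fin m → ℝ} (hσ : StrictMono σ)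
    (hsign : ∀ j : Fin m, 0 < (-1) ^ (m - j : ℕ) * p.eval (σ j)) :
    ∃ τ : Fin (m + 1) → ℝ, StrictMono τ ∧ p = ∏ i, (X - C (τ i)) := by
  obtain ⟨L, hL, hLσ⟩ := (hp.eventually_neg_one_pow_mul_eval_pos_atBot.and
    (eventually_all.2 fun j => eventually_lt_atBot (σ j))).exists
  obtain ⟨R, hR, hσR, hLR⟩ := (hp.eventually_eval_pos_atTop.and
    ((eventually_all.2 fun j => eventually_gt_atTop (σ j)).and (eventually_gt_atTop L))).exists
  set x₀ : Fin (m + 1) → ℝ := Fin.cons L σ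
  have hx₀R : ∀ k, x₀ k < R := Fin.cases (by simpa [x₀] using hLR) (by simpa [x₀] using hσR)
  set x : Fin (m + 2) → ℝ := Fin.snoc x₀ R
  have hx : StrictMono x := by
    simpa [Fin.insertNth_last'] using
      Fin.strictMono_insertNth_last (Fin.strictMono_cons.2 ⟨hLσ, hσ⟩) R (hx₀R _)
  have hxsign : ∀ k : Fin (m + 2), 0 < (-1) ^ (m + 1 - k : ℕ) * p.eval (x k) := by
    refine Fin.lastCases (by simpa [x] using hR) fun k => ?_
    refine Fin.cases (by simpa [x, x₀, hdeg] using hL) (fun j => ?_) k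
    simp only [x, x₀, Fin.snoc_castSucc, Fin.cons_succ, Fin.val_castSucc, Fin.val_succ,
      Nat.add_sub_add_right]
    exact hsign j
  obtain ⟨τ, hτ, hroot⟩ := exists_strictMono_eq_zero_of_alternating p.continuous hx hxsign
  exact ⟨τ, hτ, eq_prod_X_sub_C_of_injective_isRoot hp (by simp [hdeg]) hτ.injective hroot⟩

theorem neg_one_pow_mul_eval_derivative_prod_X_sub_C_pos {m : ℕ} {σ : Fin m → ℝ}
    (hσ : StrictMono σ) (j : Fin m) :
    0 < (-1) ^ (m - 1 - j : ℕ) * (derivative (∏ i, (X - C (σ i)))).eval (σ j) := by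
  have hsplit : univ.erase j = Iio j ∪ Ioi j := by
    ext i
    simp only [mem_erase, mem_univ, and_true, mem_union, mem_Iio, mem_Ioi]
    exact ne_iff_lt_or_gt
  have hdisj : Disjoint (Iio j) (Ioi j) :=
    disjoint_left.2 fun i hi hi' => lt_asymm (mem_Iio.1 hi) (mem_Ioi.1 hi')
  have hIoi : ∏ i ∈ Ioi j, (σ j - σ i) = (-1) ^ #(Ioi j) * ∏ i ∈ Ioi j, (σ i - σ j) := by
    rw [← prod_neg]
    simp_rw [neg_sub]
  rw [← Lagrange.nodal_eq, Lagrange.eval_nodal_derivative_eval_node_eq (mem_univ j),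
    Lagrange.eval_nodal, hsplit, prod_union hdisj, hIoi, ← Fin.card_Ioi j]
  have hsq : (-1 : ℝ) ^ #(Ioi j) * (-1) ^ #(Ioi j) = 1 := by
    rw [← mul_pow, neg_one_mul, neg_neg, one_pow]
  calc (0 : ℝ) < (∏ i ∈ Iio j, (σ j - σ i)) * ∏ i ∈ Ioi j, (σ i - σ j) :=
        mul_pos (prod_pos fun i hi => sub_pos.2 (hσ (mem_Iio.1 hi)))
          (prod_pos fun i hi => sub_pos.2 (hσ (mem_Ioi.1 hi)))
    _ = _ := by
      linear_combination (-((∏ i ∈ Iio j, (σ j - σ i)) * ∏ i ∈ Ioi j, (σ i - σ j))) * hsq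

theorem exists_strictMono_X_sub_C_mul_sub_C_mul_derivative_eq_prod {θ : ℝ} (hθ : 0 < θ) (a : ℝ)
    {m : ℕ} {σ : Fin m → ℝ} (hσ : StrictMono σ) :
    ∃ τ : Fin (m + 1) → ℝ, StrictMono τ ∧
      (X - C a) * ∏ i, (X - C (σ i)) - C θ * derivative (∏ i, (X - C (σ i)))
        = ∏ i, (X - C (τ i)) := by
  set q : ℝ[X] := ∏ i, (X - C (σ i))
  have hq : q.Monic := monic_prod_of_monic _ _ fun i _ => monic_X_sub_C _
  have hqdeg : q.natDegree = m := by
    simp [q, ← Lagrange.nodal_eq, Lagrange.natDegree_nodal]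
  have hlead : ((X - C a) * q).natDegree = m + 1 := by
    rw [(monic_X_sub_C a).natDegree_mul hq, natDegree_X_sub_C, hqdeg, add_comm]
  have hlt : (C θ * derivative q).natDegree < ((X - C a) * q).natDegree := by
    rw [hlead]
    calc (C θ * derivative q).natDegree ≤ (derivative q).natDegree := natDegree_C_mul_le _ _
      _ ≤ q.natDegree - 1 := natDegree_derivative_le q
      _ < m + 1 := by omega
  refine exists_strictMono_eq_prod_X_sub_C_of_alternating
    (((monic_X_sub_C a).mul hq).sub_of_left (degree_lt_degree hlt))
    (by rw [natDegree_sub_eq_left_of_natDegree_lt hlt, hlead]) hσ fun j => ?_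
  have hqσ : q.eval (σ j) = 0 := by
    simp only [q, eval_prod, eval_sub, eval_X, eval_C]
    exact prod_eq_zero (mem_univ j) (sub_self _)
  have hq' := neg_one_pow_mul_eval_derivative_prod_X_sub_C_pos hσ j
  rw [show m - (j : ℕ) = m - 1 - j + 1 by omega, pow_succ]
  simp only [eval_sub, eval_mul, eval_C, hqσ, mul_zero, zero_sub]
  calc (0 : ℝ) < θ * ((-1) ^ (m - 1 - j : ℕ) * (derivative q).eval (σ j)) := mul_pos hθ hq'
    _ = _ := by ring

theorem exists_strictMono_dop_neg_prod_X_sub_C {θ : ℝ} (hθ : 0 < θ) (M : Multiset ℝ) :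
    ∃ τ : Fin (Multiset.card M) → ℝ, StrictMono τ ∧
      Dop (-θ) (M.map (X - C ·)).prod = ∏ i, (X - C (τ i)) := by
  induction M using Multiset.induction_on with
  | empty =>
    rw [Multiset.card_zero]
    exact ⟨Fin.elim0, fun i => i.elim0, by simp [dop_one]⟩
  | cons a M ih =>
    obtain ⟨σ, hσ, hprod⟩ := ih
    obtain ⟨τ, hτ, hstep⟩ := exists_strictMono_X_sub_C_mul_sub_C_mul_derivative_eq_prod hθ a hσ
    rw [Multiset.card_cons]
    refine ⟨τ, hτ, ?_⟩
    rw [Multiset.map_cons, Multiset.prod_cons, dop_X_sub_C_mul, hprod, ← hstep, map_neg, neg_mul,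
      ← sub_eq_add_neg]

theorem stmt12_general (g : Polynomial ℝ) (hmonic : g.Monic)
    (hroots : (g.roots).card = g.natDegree) (θ : ℝ) (hθ : 0 < θ) :
    {x : ℝ | (Dop (-θ) g).eval x = 0}.ncard = g.natDegree := by
  obtain ⟨τ, hτ, hprod⟩ := exists_strictMono_dop_neg_prod_X_sub_C hθ g.roots
  rw [prod_multiset_X_sub_C_of_monic_of_roots_card_eq hmonic hroots] at hprod
  have hzeros : {x : ℝ | (Dop (-θ) g).eval x = 0} = Set.range τ := by
    ext x
    simp only [Set.mem_range, hprod, eval_prod, eval_sub, eval_X, eval_C,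
      prod_eq_zero_iff, mem_univ, true_and, sub_eq_zero]
    exact exists_congr fun _ => eq_comm
  rw [hzeros, Set.ncard_range_of_injective hτ.injective, Nat.card_eq_fintype_card,
    Fintype.card_fin, hroots]

/-- Strict hyperbolicity core: if `g` is monic, real-rooted of degree `n ≥ 1`
(it has `n` real roots counted with multiplicity) and `θ > 0`, then
`c = D_{−θ} g` has exactly `n` distinct real roots. -/
theorem stmt12 (g : Polynomial ℝ) (hmonic : g.Monic) (hn : 1 ≤ g.natDegree)
    (hroots : (g.roots).card = g.natDegree) (θ : ℝ) (hθ : 0 < θ) :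
    {x : ℝ | (Dop (-θ) g).eval x = 0}.ncard = g.natDegree :=
  stmt12_general g hmonic hroots θ hθ
end

section
/- Let N ≥ 1, θ ∈ ℝ, U ∈ ℝ, and set c := D_{−θ}((X − U)^{2N+1}). Then for all integers k, j ≥ 0 with k + j ≤ 2N, the polynomial D_θ(X^k · c^{(j)}) vanishes at U, i.e. (D_θ(X^k · c^{(j)}))(U) = 0, where c^{(j)} denotes the j-th derivative of c. -/
open Polynomial Finset

section Truncation

variable {K : Type*} [Field K]

noncomputable def DopTrunc (n : ℕ) (θ : K) (f : K[X]) : K[X] :=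
  ∑ k ∈ range n, C ((θ / 2) ^ k / (k.factorial : K)) * derivative^[2 * k] f

lemma DopTrunc_add (n : ℕ) (θ : K) (f g : K[X]) :
    DopTrunc n θ (f + g) = DopTrunc n θ f + DopTrunc n θ g := by
  simp only [DopTrunc, iterate_map_add, mul_add, sum_add_distrib]

lemma DopTrunc_C_mul (n : ℕ) (θ a : K) (f : K[X]) :
    DopTrunc n θ (C a * f) = C a * DopTrunc n θ f := by
  simp only [DopTrunc, iterate_derivative_C_mul, mul_sum, mul_left_comm]

lemma derivative_DopTrunc (n : ℕ) (θ : K) (f : K[X]) :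
    derivative (DopTrunc n θ f) = DopTrunc n θ (derivative f) := by
  simp only [DopTrunc, map_sum, derivative_C_mul, ← Function.iterate_succ_apply',
    Function.iterate_succ_apply]

lemma DopTrunc_succ_mul_X [CharZero K] (n : ℕ) (θ : K) (f : K[X]) :
    DopTrunc (n + 1) θ (f * X) =
      DopTrunc (n + 1) θ f * X + C θ * DopTrunc n θ (derivative f) := by
  have term (k : ℕ) :
      C ((θ / 2) ^ (k + 1) / ((k + 1).factorial : K)) * derivative^[2 * (k + 1)] (f * X) =
        C ((θ / 2) ^ (k + 1) / ((k + 1).factorial : K)) * derivative^[2 * (k + 1)] f * X +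
          C θ * (C ((θ / 2) ^ k / (k.factorial : K)) * derivative^[2 * k] (derivative f)) := by
    have hcoef : (θ / 2) ^ (k + 1) / ((k + 1).factorial : K) * ((2 * (k + 1) : ℕ) : K) =
        θ * ((θ / 2) ^ k / (k.factorial : K)) := by
      rw [Nat.factorial_succ]
      push_cast
      field_simp
      ring
    rw [iterate_derivative_mul_X, show 2 * (k + 1) - 1 = 2 * k + 1 by omega,
      Function.iterate_succ_apply, nsmul_eq_mul, ← C_eq_natCast, mul_add, ← mul_assoc,
      ← mul_assoc (C _) (C _), ← C_mul, hcoef, C_mul, mul_assoc (C θ)]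
  rw [DopTrunc, DopTrunc, DopTrunc, sum_range_succ', sum_range_succ']
  simp only [term, sum_add_distrib, ← sum_mul, mul_sum, pow_zero, Nat.factorial_zero, Nat.cast_one,
    div_one, map_one, mul_zero, Function.iterate_zero, id_eq, one_mul]
  ring

end Truncation

lemma Dop_eq_DopTrunc {n : ℕ} (θ : ℝ) {f : ℝ[X]} (hn : f.natDegree < n) :
    Dop θ f = DopTrunc n θ f := by
  refine sum_subset (range_subset_range.2 hn) fun k _ hk => ?_
  rw [mem_range, not_lt] at hk
  rw [iterate_derivative_eq_zero (by omega), mul_zero]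

lemma Dop_add (θ : ℝ) (f g : ℝ[X]) : Dop θ (f + g) = Dop θ f + Dop θ g := by
  have hdeg := natDegree_add_le f g
  rw [Dop_eq_DopTrunc θ (Nat.lt_succ_of_le hdeg), DopTrunc_add,
    Dop_eq_DopTrunc θ (n := max f.natDegree g.natDegree + 1) (by omega),
    Dop_eq_DopTrunc θ (n := max f.natDegree g.natDegree + 1) (by omega)]

lemma Dop_C_mul (θ a : ℝ) (f : ℝ[X]) : Dop θ (C a * f) = C a * Dop θ f := by
  rw [Dop_eq_DopTrunc θ (n := f.natDegree + 1) ((natDegree_C_mul_le a f).trans_lt (by omega)),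
    DopTrunc_C_mul, Dop_eq_DopTrunc θ (Nat.lt_succ_self _)]

lemma Dop_C (θ a : ℝ) : Dop θ (C a) = C a := by
  simp [Dop]

lemma derivative_Dop (θ : ℝ) (f : ℝ[X]) : derivative (Dop θ f) = Dop θ (derivative f) := by
  rw [Dop_eq_DopTrunc θ (Nat.lt_succ_self _), derivative_DopTrunc,
    Dop_eq_DopTrunc θ (n := f.natDegree + 1) ((natDegree_derivative_le f).trans_lt (by omega))]

lemma iterate_derivative_Dop (θ : ℝ) (f : ℝ[X]) (j : ℕ) :
    derivative^[j] (Dop θ f) = Dop θ (derivative^[j] f) := by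
  induction j generalizing f with
  | zero => rfl
  | succ j ih => rw [Function.iterate_succ_apply, derivative_Dop, ih, Function.iterate_succ_apply]

lemma Dop_mul_X (θ : ℝ) (f : ℝ[X]) :
    Dop θ (f * X) = Dop θ f * X + C θ * derivative (Dop θ f) := by
  have hfX : (f * X).natDegree < f.natDegree + 1 + 1 := by
    have := natDegree_mul_le (p := f) (q := X)
    have := natDegree_X_le (R := ℝ)
    omega
  rw [Dop_eq_DopTrunc θ hfX, DopTrunc_succ_mul_X, derivative_Dop,
    Dop_eq_DopTrunc θ (n := f.natDegree + 1) ((natDegree_derivative_le f).trans_lt (by omega)),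
    Dop_eq_DopTrunc θ (n := f.natDegree + 1 + 1) (by omega)]

/- By `Dop_mul_X`, `Dop θ ∘ Dop (-θ)` commutes with multiplication by `X`: the two
`θ ∂` correction terms cancel. -/
lemma Dop_Dop_neg (θ : ℝ) (g : ℝ[X]) : Dop θ (Dop (-θ) g) = g := by
  induction g using Polynomial.induction_on with
  | C a => rw [Dop_C, Dop_C]
  | add p q hp hq => rw [Dop_add, Dop_add, hp, hq]
  | monomial n a ih =>
    rw [pow_succ, ← mul_assoc, Dop_mul_X, Dop_add, Dop_C_mul θ (-θ), ← derivative_Dop,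
      Dop_mul_X, ih, C_neg]
    ring

lemma pow_sub_dvd_Dop_X_pow_mul (θ : ℝ) {p f : ℝ[X]} {m : ℕ} (h : p ^ m ∣ Dop θ f) (k : ℕ) :
    p ^ (m - k) ∣ Dop θ (X ^ k * f) := by
  induction k with
  | zero => simpa using h
  | succ k ih =>
    rw [pow_succ, mul_right_comm, Dop_mul_X]
    exact dvd_add ((pow_dvd_pow p (by omega)).trans ih |>.mul_right X)
      ((pow_dvd_pow p (by omega)).trans (pow_sub_one_dvd_derivative_of_pow_dvd ih) |>.mul_left _)

theorem stmt18_general (N : ℕ) (θ U : ℝ) :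
    ∀ k j : ℕ, k + j ≤ 2*N →
      (Dop θ (Polynomial.X ^ k *
        Polynomial.derivative^[j]
          (Dop (-θ) ((Polynomial.X - Polynomial.C U) ^ (2*N+1))))).eval U = 0 := by
  intro k j hkj
  have hc : (X - C U) ^ (2 * N + 1 - j) ∣
      Dop θ (derivative^[j] (Dop (-θ) ((X - C U) ^ (2 * N + 1)))) := by
    rw [← iterate_derivative_Dop, Dop_Dop_neg]
    exact pow_sub_dvd_iterate_derivative_pow _ _ _
  exact dvd_iff_isRoot.1 ((dvd_pow_self _ (by omega)).trans (pow_sub_dvd_Dop_X_pow_mul θ hc k))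

/-- For `c = D_{−θ}((X − U)^{2N+1})` and all `k + j ≤ 2N`, the polynomial
`D_θ(X^k · c^{(j)})` vanishes at `U`. -/
theorem stmt18 (N : ℕ) (hN : 1 ≤ N) (θ U : ℝ) :
    ∀ k j : ℕ, k + j ≤ 2*N →
      (Dop θ (Polynomial.X ^ k *
        Polynomial.derivative^[j]
          (Dop (-θ) ((Polynomial.X - Polynomial.C U) ^ (2*N+1))))).eval U = 0 :=
  stmt18_general N θ U
end
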